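/- (Main Theorem) Every relaxed weak post-Hopf structure ▷ on Sweedler's 4-dimensional Hopf algebra H₄ is, on the basis {1, g, ν, gν}, of exactly one of the following six forms (extended bilinearly): (i) 1▷ acts as identity on the basis; g▷: 1↦1, g↦g, ν↦-ν, gν↦-gν; ν▷: 1↦0, g↦0, ν↦aν, gν↦a·gν; gν▷: 1↦0, g↦0, ν↦aν, gν↦a·gν, for some a ∈ k; (ii) 1▷ acts as identity on the basis; g▷: 1↦1, g↦1, ν↦0, gν↦0; ν▷: 1↦0, g↦a-a·g, ν↦-aν, gν↦-a·gν; gν▷: 1↦0, g↦a-a·g, ν↦-aν, gν↦-a·gν, for some a ∈ k; (iii) 1▷ and g▷ act as identity on the basis; ν▷ and gν▷ are zero; (iv) 1▷: 1↦1, g↦g, ν↦0, gν↦0; g▷: 1↦1, g↦g, ν↦0, gν↦0; ν▷ and gν▷ are zero; (v) 1▷: 1↦1, g↦g, ν↦0, gν↦0; g▷: 1↦1, g↦1, ν↦0, gν↦0; ν▷ and gν▷ are zero; (vi) 1▷: 1↦1, g↦1, ν↦0, gν↦0; g▷: 1↦1, g↦1, ν↦0, gν↦0; ν▷ and gν▷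 are zero. -/

import Mathlib

open TensorProduct Coalgebra

/-- `H`, together with the chosen elements `g` and `ν`, is a copy of Sweedler's
4-dimensional Hopf algebra over `k`: `{1, g, ν, gν}` is a basis, the defining relations
`g² = 1`, `ν² = 0`, `gν + νg = 0` hold, and the comultiplication, counit and antipode
take the prescribed values on `g` and `ν`. -/
structure IsSweedlerHopf (k : Type*) {H : Type*} [Field k] [Ring H]
    [HopfAlgebra k H] (g ν : H) : Prop where
  g_sq : g * g = 1
  ν_sq : ν * ν = 0
  anticomm : g * ν + ν * g = 0
  comul_g : comul (R := k) g = g ⊗ₜ[k] g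
  comul_ν : comul (R := k) ν = g ⊗ₜ[k] ν + ν ⊗ₜ[k] (1 : H)
  counit_g : counit (R := k) g = 1
  counit_ν : counit (R := k) ν = 0
  antipode_g : HopfAlgebra.antipode (R := k) g = g
  antipode_ν : HopfAlgebra.antipode (R := k) ν = -(g * ν)
  basis_indep : LinearIndependent k ![(1 : H), g, ν, g * ν]
  basis_span : Submodule.span k {(1 : H), g, ν, g * ν} = ⊤

/-- A relaxed weak post-Hopf structure on a Hopf algebra `H` over `k`:
a bilinear operation `t` (written `x ▷ y := t x y`) which, as a map `H ⊗ H → H`, is a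
coalgebra homomorphism (i.e. `Δ(x ▷ y) = (x₁ ▷ y₁) ⊗ (x₂ ▷ y₂)` and
`ε(x ▷ y) = ε(x) ε(y)`), and which satisfies `x ▷ (y z) = (x₁ ▷ y) (x₂ ▷ z)` and
`x ▷ (y ▷ z) = (x₁ (x₂ ▷ y)) ▷ z` (Sweedler notation expressed via `comul`). -/
structure IsRelaxedWeakPostHopf (k : Type*) {H : Type*} [CommSemiring k] [Semiring H]
    [HopfAlgebra k H] (t : H →ₗ[k] H →ₗ[k] H) : Prop where
  comul_hom : ∀ x y : H,
    comul (R := k) (t x y) =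
      (TensorProduct.map (TensorProduct.lift t) (TensorProduct.lift t))
        ((TensorProduct.tensorTensorTensorComm k H H H H)
          (comul (R := k) x ⊗ₜ[k] comul (R := k) y))
  counit_hom : ∀ x y : H,
    counit (R := k) (t x y) = counit (R := k) x * counit (R := k) y
  mul_compat : ∀ x y z : H,
    t x (y * z) =
      (LinearMap.mul' k H ∘ₗ TensorProduct.map (t.flip y) (t.flip z)) (comul (R := k) x)
  act_compat : ∀ x y z : H,
    t x (t y z) =
      (t.flip z ∘ₗ LinearMap.mul' k H ∘ₗ TensorProduct.map LinearMap.id (t.flip y))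
        (comul (R := k) x)

section Infra
variable {k H : Type*} [Field k] [CharZero k] [Ring H] [HopfAlgebra k H]
  {g ν : H}

/-- extraction functional -/
noncomputable def pr (f f' : H →ₗ[k] k) : H ⊗[k] H →ₗ[k] k :=
  (TensorProduct.lid k k).toLinearMap ∘ₗ TensorProduct.map f f'

@[simp] lemma pr_tmul (f f' : H →ₗ[k] k) (x y : H) :
    pr f f' (x ⊗ₜ[k] y) = f x * f' y := by
  simp [pr, TensorProduct.lid_tmul, smul_eq_mul]

variable (hs : IsSweedlerHopf k g ν)

noncomputable def swB (hs : IsSweedlerHopf k g ν) : Module.Basis (Fin 4) k H :=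
  Module.Basis.mk hs.basis_indep (by
    rw [show Set.range ![(1:H), g, ν, g*ν] = {(1:H), g, ν, g*ν} by
      ext x; simp [Matrix.range_cons, Matrix.range_empty]; tauto,
      hs.basis_span])

include hs

lemma indep4 (a b c d : k) (h : a • (1:H) + b • g + c • ν + d • (g*ν) = 0) :
    a = 0 ∧ b = 0 ∧ c = 0 ∧ d = 0 := by
  have := Fintype.linearIndependent_iff.mp hs.basis_indep ![a,b,c,d]
    (by simpa [Fin.sum_univ_four] using h)
  exact ⟨this 0, this 1, this 2, this 3⟩

lemma eq4 {a b c d a' b' c' d' : k}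
    (h : a • (1:H) + b • g + c • ν + d • (g*ν) = a' • (1:H) + b' • g + c' • ν + d' • (g*ν)) :
    a = a' ∧ b = b' ∧ c = c' ∧ d = d' := by
  have h' : (a-a') • (1:H) + (b-b') • g + (c-c') • ν + (d-d') • (g*ν) = 0 := by
    simp only [sub_smul]; rw [← sub_eq_zero] at h; rw [← h]; abel
  obtain ⟨h1, h2, h3, h4⟩ := indep4 hs _ _ _ _ h'
  exact ⟨sub_eq_zero.mp h1, sub_eq_zero.mp h2, sub_eq_zero.mp h3, sub_eq_zero.mp h4⟩

lemma repr4 (x : H) : ∃ a b c d : k, x = a • (1:H) + b • g + c • ν + d • (g*ν) := by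
  have hx : x ∈ Submodule.span k ({(1:H), g, ν, g*ν} : Set H) := by
    rw [hs.basis_span]; trivial
  rw [Submodule.mem_span_insert] at hx
  obtain ⟨a, z, hz, rfl⟩ := hx
  rw [Submodule.mem_span_insert] at hz
  obtain ⟨b, z2, hz2, rfl⟩ := hz
  rw [Submodule.mem_span_insert] at hz2
  obtain ⟨c, z3, hz3, rfl⟩ := hz2
  rw [Submodule.mem_span_singleton] at hz3
  obtain ⟨d, rfl⟩ := hz3
  exact ⟨a, b, c, d, by abel⟩


lemma swB_apply (j : Fin 4) : swB hs j = ![(1:H), g, ν, g*ν] j := Module.Basis.mk_apply _ _ _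

lemma coord_apply' (i j : Fin 4) :
    (swB hs).coord i (![(1:H), g, ν, g*ν] j) = if j = i then 1 else 0 := by
  rw [show ![(1:H), g, ν, g*ν] j = swB hs j from (swB_apply hs j).symm,
    Module.Basis.coord_apply, Module.Basis.repr_self, Finsupp.single_apply]

@[simp] lemma coord_one (i : Fin 4) : (swB hs).coord i (1:H) = if i = 0 then 1 else 0 := by
  simpa [eq_comm] using coord_apply' hs i 0

@[simp] lemma coord_g (i : Fin 4) : (swB hs).coord i g = if i = 1 then 1 else 0 := by
  simpa [eq_comm] using coord_apply' hs i 1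

@[simp] lemma coord_ν (i : Fin 4) : (swB hs).coord i ν = if i = 2 then 1 else 0 := by
  simpa [eq_comm] using coord_apply' hs i 2

@[simp] lemma coord_gν (i : Fin 4) : (swB hs).coord i (g*ν) = if i = 3 then 1 else 0 := by
  simpa [eq_comm] using coord_apply' hs i 3

lemma comul_one' : comul (R:=k) (1:H) = (1:H) ⊗ₜ[k] (1:H) := by
  rw [Bialgebra.comul_one]; rfl

lemma comul_gν : comul (R:=k) (g*ν) = (1:H) ⊗ₜ[k] (g*ν) + (g*ν) ⊗ₜ[k] g := by
  rw [Bialgebra.comul_mul, hs.comul_g, hs.comul_ν, mul_add,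
    Algebra.TensorProduct.tmul_mul_tmul, Algebra.TensorProduct.tmul_mul_tmul,
    hs.g_sq, mul_one]

lemma counit_gν : counit (R:=k) (g*ν) = 0 := by
  rw [Bialgebra.counit_mul, hs.counit_ν, mul_zero]

lemma comul_expand (a b c d : k) :
    comul (R:=k) (a•(1:H) + b•g + c•ν + d•(g*ν)) =
      a•((1:H) ⊗ₜ[k] (1:H)) + b•(g ⊗ₜ[k] g) + c•(g ⊗ₜ[k] ν + ν ⊗ₜ[k] (1:H))
        + d•((1:H) ⊗ₜ[k] (g*ν) + (g*ν) ⊗ₜ[k] g) := by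
  rw [map_add, map_add, map_add, map_smul, map_smul, map_smul, map_smul,
    comul_one' (hs:=hs), hs.comul_g, hs.comul_ν, comul_gν hs]

lemma counit_expand (a b c d : k) :
    counit (R:=k) (a•(1:H) + b•g + c•ν + d•(g*ν)) = a + b := by
  rw [map_add, map_add, map_add, map_smul, map_smul, map_smul, map_smul,
    Bialgebra.counit_one, hs.counit_g, hs.counit_ν, counit_gν hs]
  simp

lemma prim_11 (w : H) (hw : comul (R:=k) w = (1:H) ⊗ₜ[k] w + w ⊗ₜ[k] (1:H)) : w = 0 := by
  obtain ⟨a, b, c, d, rfl⟩ := repr4 hs w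
  rw [comul_expand hs] at hw
  have e00 := congrArg (pr ((swB hs).coord 0) ((swB hs).coord 0)) hw
  have e01 := congrArg (pr ((swB hs).coord 0) ((swB hs).coord 1)) hw
  have e12 := congrArg (pr ((swB hs).coord 1) ((swB hs).coord 2)) hw
  have e30 := congrArg (pr ((swB hs).coord 3) ((swB hs).coord 0)) hw
  simp [map_add, map_smul, smul_tmul', tmul_smul, add_tmul, tmul_add,
    coord_one hs, coord_g hs, coord_ν hs, coord_gν hs] at e00 e01 e12 e30
  rw [e00, ← e01, e12, ← e30]; simp

set_option maxHeartbeats 1000000 in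
lemma prim_g1 (w : H) (hw : comul (R:=k) w = g ⊗ₜ[k] w + w ⊗ₜ[k] (1:H)) :
    ∃ a c : k, w = a•(1:H) + (-a)•g + c•ν := by
  obtain ⟨a, b, c, d, rfl⟩ := repr4 hs w
  rw [comul_expand hs] at hw
  have e10 := congrArg (pr ((swB hs).coord 1) ((swB hs).coord 0)) hw
  have e03 := congrArg (pr ((swB hs).coord 0) ((swB hs).coord 3)) hw
  simp [map_add, map_smul, smul_tmul', tmul_smul, add_tmul, tmul_add,
    coord_one hs, coord_g hs, coord_ν hs, coord_gν hs] at e10 e03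
  refine ⟨a, c, ?_⟩
  have hb : b = -a := by linear_combination -e10
  rw [hb, e03]; simp

set_option maxHeartbeats 1000000 in
lemma prim_1g (w : H) (hw : comul (R:=k) w = (1:H) ⊗ₜ[k] w + w ⊗ₜ[k] g) :
    ∃ a d : k, w = a•(1:H) + (-a)•g + d•(g*ν) := by
  obtain ⟨a, b, c, d, rfl⟩ := repr4 hs w
  rw [comul_expand hs] at hw
  have e01 := congrArg (pr ((swB hs).coord 0) ((swB hs).coord 1)) hw
  have e12 := congrArg (pr ((swB hs).coord 1) ((swB hs).coord 2)) hw
  simp [map_add, map_smul, smul_tmul', tmul_smul, add_tmul, tmul_add,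
    coord_one hs, coord_g hs, coord_ν hs, coord_gν hs] at e01 e12
  refine ⟨a, d, ?_⟩
  have hb : b = -a := by linear_combination -e01
  rw [hb, e12]; simp

set_option maxHeartbeats 1000000 in
lemma prim_gg (w : H) (hw : comul (R:=k) w = g ⊗ₜ[k] w + w ⊗ₜ[k] g) : w = 0 := by
  obtain ⟨a, b, c, d, rfl⟩ := repr4 hs w
  rw [comul_expand hs] at hw
  have e00 := congrArg (pr ((swB hs).coord 0) ((swB hs).coord 0)) hw
  have e11 := congrArg (pr ((swB hs).coord 1) ((swB hs).coord 1)) hw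
  have e20 := congrArg (pr ((swB hs).coord 2) ((swB hs).coord 0)) hw
  have e03 := congrArg (pr ((swB hs).coord 0) ((swB hs).coord 3)) hw
  simp [map_add, map_smul, smul_tmul', tmul_smul, add_tmul, tmul_add,
    coord_one hs, coord_g hs, coord_ν hs, coord_gν hs] at e00 e11 e20 e03
  rw [e00, e11, e20, e03]; simp

set_option maxHeartbeats 1000000 in
lemma prim_sp (w : H) (s : k)
    (hw : comul (R:=k) w = (1:H) ⊗ₜ[k] w + w ⊗ₜ[k] (1:H) + s•((1:H) ⊗ₜ[k] ν) - s•(g ⊗ₜ[k] ν)) :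
    w = (-s)•ν := by
  obtain ⟨a, b, c, d, rfl⟩ := repr4 hs w
  rw [comul_expand hs] at hw
  have e00 := congrArg (pr ((swB hs).coord 0) ((swB hs).coord 0)) hw
  have e01 := congrArg (pr ((swB hs).coord 0) ((swB hs).coord 1)) hw
  have e12 := congrArg (pr ((swB hs).coord 1) ((swB hs).coord 2)) hw
  have e30 := congrArg (pr ((swB hs).coord 3) ((swB hs).coord 0)) hw
  simp [map_add, map_smul, smul_tmul', tmul_smul, add_tmul, tmul_add,
    coord_one hs, coord_g hs, coord_ν hs, coord_gν hs] at e00 e01 e12 e30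
  rw [e00, ← e01, e12, ← e30]; simp

set_option maxHeartbeats 1000000 in
lemma grouplike_cases (u : H) (hw : comul (R:=k) u = u ⊗ₜ[k] u)
    (hc : counit (R:=k) u = 1) : u = 1 ∨ u = g := by
  obtain ⟨a, b, c, d, rfl⟩ := repr4 hs u
  rw [comul_expand hs] at hw
  rw [counit_expand hs] at hc
  have e00 := congrArg (pr ((swB hs).coord 0) ((swB hs).coord 0)) hw
  have e01 := congrArg (pr ((swB hs).coord 0) ((swB hs).coord 1)) hw
  have e12 := congrArg (pr ((swB hs).coord 1) ((swB hs).coord 2)) hw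
  have e21 := congrArg (pr ((swB hs).coord 2) ((swB hs).coord 1)) hw
  have e03 := congrArg (pr ((swB hs).coord 0) ((swB hs).coord 3)) hw
  have e30 := congrArg (pr ((swB hs).coord 3) ((swB hs).coord 0)) hw
  simp [map_add, map_smul, smul_tmul', tmul_smul, add_tmul, tmul_add,
    coord_one hs, coord_g hs, coord_ν hs, coord_gν hs] at e00 e01 e12 e21 e03 e30
  rcases e01 with hb | ha
  · have ha : a = 1 := by linear_combination hc - hb
    have hc0 : c = 0 := by rw [hb] at e12; simpa using e12
    have hd0 : d = 0 := by
      rcases e30 with h | h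
      · rw [ha] at h; exact absurd h one_ne_zero
      · exact h
    left; rw [ha, hb, hc0, hd0]; simp
  · have hb : b = 1 := by linear_combination hc - ha
    have hc0 : c = 0 := by
      rcases e21 with h | h
      · rw [hb] at h; exact absurd h one_ne_zero
      · exact h
    have hd0 : d = 0 := by rw [ha] at e03; simpa using e03
    right; rw [ha, hb, hc0, hd0]; simp

lemma sw_νg : ν * g = -(g*ν) := by
  exact eq_neg_of_add_eq_zero_right hs.anticomm

lemma sw_g_gν : g * (g*ν) = ν := by rw [← mul_assoc, hs.g_sq, one_mul]

lemma sw_gν_g : (g*ν) * g = -ν := by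
  rw [mul_assoc, sw_νg hs, mul_neg, sw_g_gν hs]

lemma sw_ν_gν : ν * (g*ν) = 0 := by
  rw [← mul_assoc, sw_νg hs, neg_mul, mul_assoc, hs.ν_sq, mul_zero, neg_zero]

lemma sw_gν_ν : (g*ν) * ν = 0 := by rw [mul_assoc, hs.ν_sq, mul_zero]

lemma sw_gν_gν : (g*ν) * (g*ν) = 0 := by
  rw [mul_assoc, ← mul_assoc ν g ν, sw_νg hs, neg_mul, mul_assoc, hs.ν_sq,
    mul_zero, neg_zero, mul_zero]

lemma one_ne_g : (1:H) ≠ g := by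
  intro h
  have h0 : (1:k) • (1:H) + (-1:k) • g + (0:k) • ν + (0:k) • (g*ν) = 0 := by
    rw [← h]; simp
  exact one_ne_zero (indep4 hs _ _ _ _ h0).1

lemma ν_ne_zero : ν ≠ 0 := by
  intro h
  have h0 : (0:k) • (1:H) + (0:k) • g + (1:k) • ν + (0:k) • (g*ν) = 0 := by simp [h]
  exact one_ne_zero (indep4 hs _ _ _ _ h0).2.2.1

lemma neg_ν_ne : -ν ≠ ν := by
  intro h
  have h0 : (0:k) • (1:H) + (0:k) • g + (2:k) • ν + (0:k) • (g*ν) = 0 := by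
    have h2 : ν + ν = 0 := by nth_rewrite 2 [← h]; exact add_neg_cancel ν
    rw [two_smul]
    simp only [zero_smul, zero_add, add_zero]
    exact h2
  exact two_ne_zero (indep4 hs _ _ _ _ h0).2.2.1

lemma smul_ν_inj {a b : k} (h : a • ν = b • ν) : a = b := by
  have h0 : (0:k) • (1:H) + (0:k) • g + (a-b) • ν + (0:k) • (g*ν) = 0 := by
    rw [sub_smul, h]; simp
  have := (indep4 hs _ _ _ _ h0).2.2.1
  linear_combination this

lemma skew_force {w : H} (hcomm : g * w = -(w * g))
    (hw : ∃ a c : k, w = a•(1:H) + (-a)•g + c•ν) : ∃ c : k, w = c • ν := by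
  obtain ⟨a, c, rfl⟩ := hw
  have e0 := congrArg ((swB hs).coord 0) hcomm
  simp [mul_add, add_mul, mul_smul_comm, smul_mul_assoc, mul_one, one_mul,
    hs.g_sq, sw_νg hs, map_add, map_smul, map_neg, smul_neg,
    coord_one hs, coord_g hs, coord_ν hs, coord_gν hs] at e0
  have ha : a = 0 := by linear_combination (-(1:k)/2) * e0
  exact ⟨c, by rw [ha]; simp⟩

lemma skew_force2 {w : H} (hcomm : w + w * g = 0)
    (hw : ∃ a d : k, w = a•(1:H) + (-a)•g + d•(g*ν)) :
    ∃ a : k, w = a•(1:H) + (-a)•g := by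
  obtain ⟨a, d, rfl⟩ := hw
  have e2 := congrArg ((swB hs).coord 2) hcomm
  simp [mul_add, add_mul, mul_smul_comm, smul_mul_assoc, mul_one, one_mul,
    hs.g_sq, sw_gν_g hs, map_add, map_smul, map_neg, map_zero, smul_neg,
    coord_one hs, coord_g hs, coord_ν hs, coord_gν hs] at e2
  exact ⟨a, by rw [e2]; simp⟩

end Infra

section Evals
variable {k H : Type*} [Field k] [CharZero k] [Ring H] [HopfAlgebra k H]
  {g ν : H} (hs : IsSweedlerHopf k g ν)
  {t : H →ₗ[k] H →ₗ[k] H} (ht : IsRelaxedWeakPostHopf k t)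
include hs ht

lemma mulc_one (y z : H) : t 1 (y*z) = t 1 y * t 1 z := by
  have h := ht.mul_compat 1 y z
  rw [comul_one' hs] at h
  simpa only [LinearMap.coe_comp, Function.comp_apply, TensorProduct.map_tmul,
    LinearMap.mul'_apply, LinearMap.flip_apply] using h

lemma mulc_g (y z : H) : t g (y*z) = t g y * t g z := by
  have h := ht.mul_compat g y z
  rw [hs.comul_g] at h
  simpa only [LinearMap.coe_comp, Function.comp_apply, TensorProduct.map_tmul,
    LinearMap.mul'_apply, LinearMap.flip_apply] using h

lemma mulc_ν (y z : H) : t ν (y*z) = t g y * t ν z + t ν y * t 1 z := by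
  have h := ht.mul_compat ν y z
  rw [hs.comul_ν] at h
  simpa only [LinearMap.coe_comp, Function.comp_apply, map_add, TensorProduct.map_tmul,
    LinearMap.mul'_apply, LinearMap.flip_apply] using h

lemma mulc_gν (y z : H) : t (g*ν) (y*z) = t 1 y * t (g*ν) z + t (g*ν) y * t g z := by
  have h := ht.mul_compat (g*ν) y z
  rw [comul_gν hs] at h
  simpa only [LinearMap.coe_comp, Function.comp_apply, map_add, TensorProduct.map_tmul,
    LinearMap.mul'_apply, LinearMap.flip_apply] using h

lemma actc_one (y z : H) : t 1 (t y z) = t (t 1 y) z := by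
  have h := ht.act_compat 1 y z
  rw [comul_one' hs] at h
  simpa only [LinearMap.coe_comp, Function.comp_apply, TensorProduct.map_tmul,
    LinearMap.mul'_apply, LinearMap.flip_apply, LinearMap.id_coe, id_eq, one_mul] using h

lemma actc_g (y z : H) : t g (t y z) = t (g * t g y) z := by
  have h := ht.act_compat g y z
  rw [hs.comul_g] at h
  simpa only [LinearMap.coe_comp, Function.comp_apply, TensorProduct.map_tmul,
    LinearMap.mul'_apply, LinearMap.flip_apply, LinearMap.id_coe, id_eq] using h

lemma actc_ν (y z : H) : t ν (t y z) = t (g * t ν y) z + t (ν * t 1 y) z := by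
  have h := ht.act_compat ν y z
  rw [hs.comul_ν] at h
  simpa only [LinearMap.coe_comp, Function.comp_apply, map_add, TensorProduct.map_tmul,
    LinearMap.mul'_apply, LinearMap.flip_apply, LinearMap.id_coe, id_eq,
    LinearMap.add_apply] using h

lemma actc_gν (y z : H) : t (g*ν) (t y z) = t (t (g*ν) y) z + t ((g*ν) * t g y) z := by
  have h := ht.act_compat (g*ν) y z
  rw [comul_gν hs] at h
  simpa only [LinearMap.coe_comp, Function.comp_apply, map_add, TensorProduct.map_tmul,
    LinearMap.mul'_apply, LinearMap.flip_apply, LinearMap.id_coe, id_eq,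
    LinearMap.add_apply, one_mul] using h

lemma ch_one_one : comul (R:=k) (t 1 1) = t 1 1 ⊗ₜ[k] t 1 1 := by
  have h := ht.comul_hom 1 1
  rw [comul_one' hs] at h
  simpa only [TensorProduct.tensorTensorTensorComm_tmul, TensorProduct.map_tmul,
    TensorProduct.lift.tmul] using h

lemma ch_one_g : comul (R:=k) (t 1 g) = t 1 g ⊗ₜ[k] t 1 g := by
  have h := ht.comul_hom 1 g
  rw [comul_one' hs, hs.comul_g] at h
  simpa only [TensorProduct.tensorTensorTensorComm_tmul, TensorProduct.map_tmul,
    TensorProduct.lift.tmul] using h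

lemma ch_g_one : comul (R:=k) (t g 1) = t g 1 ⊗ₜ[k] t g 1 := by
  have h := ht.comul_hom g 1
  rw [comul_one' hs, hs.comul_g] at h
  simpa only [TensorProduct.tensorTensorTensorComm_tmul, TensorProduct.map_tmul,
    TensorProduct.lift.tmul] using h

lemma ch_g_g : comul (R:=k) (t g g) = t g g ⊗ₜ[k] t g g := by
  have h := ht.comul_hom g g
  rw [hs.comul_g] at h
  simpa only [TensorProduct.tensorTensorTensorComm_tmul, TensorProduct.map_tmul,
    TensorProduct.lift.tmul] using h

lemma ch_one_ν : comul (R:=k) (t 1 ν) = t 1 g ⊗ₜ[k] t 1 ν + t 1 ν ⊗ₜ[k] t 1 1 := by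
  have h := ht.comul_hom 1 ν
  rw [comul_one' hs, hs.comul_ν] at h
  simpa only [TensorProduct.tensorTensorTensorComm_tmul, TensorProduct.map_tmul,
    TensorProduct.lift.tmul, tmul_add, add_tmul, map_add] using h

lemma ch_g_ν : comul (R:=k) (t g ν) = t g g ⊗ₜ[k] t g ν + t g ν ⊗ₜ[k] t g 1 := by
  have h := ht.comul_hom g ν
  rw [hs.comul_g, hs.comul_ν] at h
  simpa only [TensorProduct.tensorTensorTensorComm_tmul, TensorProduct.map_tmul,
    TensorProduct.lift.tmul, tmul_add, add_tmul, map_add] using h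

lemma ch_ν_g : comul (R:=k) (t ν g) = t g g ⊗ₜ[k] t ν g + t ν g ⊗ₜ[k] t 1 g := by
  have h := ht.comul_hom ν g
  rw [hs.comul_g, hs.comul_ν] at h
  simpa only [TensorProduct.tensorTensorTensorComm_tmul, TensorProduct.map_tmul,
    TensorProduct.lift.tmul, tmul_add, add_tmul, map_add] using h

lemma ch_ν_ν : comul (R:=k) (t ν ν) =
    t g g ⊗ₜ[k] t ν ν + t ν g ⊗ₜ[k] t 1 ν + t g ν ⊗ₜ[k] t ν 1 + t ν ν ⊗ₜ[k] t 1 1 := by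
  have h := ht.comul_hom ν ν
  rw [hs.comul_ν] at h
  simpa only [TensorProduct.tensorTensorTensorComm_tmul, TensorProduct.map_tmul,
    TensorProduct.lift.tmul, tmul_add, add_tmul, map_add, add_assoc] using h

lemma ch_gν_g : comul (R:=k) (t (g*ν) g) =
    t 1 g ⊗ₜ[k] t (g*ν) g + t (g*ν) g ⊗ₜ[k] t g g := by
  have h := ht.comul_hom (g*ν) g
  rw [hs.comul_g, comul_gν hs] at h
  simpa only [TensorProduct.tensorTensorTensorComm_tmul, TensorProduct.map_tmul,
    TensorProduct.lift.tmul, tmul_add, add_tmul, map_add] using h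

lemma ch_gν_ν : comul (R:=k) (t (g*ν) ν) =
    t 1 g ⊗ₜ[k] t (g*ν) ν + t (g*ν) g ⊗ₜ[k] t g ν
      + t 1 ν ⊗ₜ[k] t (g*ν) 1 + t (g*ν) ν ⊗ₜ[k] t g 1 := by
  have h := ht.comul_hom (g*ν) ν
  rw [hs.comul_ν, comul_gν hs] at h
  simpa only [TensorProduct.tensorTensorTensorComm_tmul, TensorProduct.map_tmul,
    TensorProduct.lift.tmul, tmul_add, add_tmul, map_add, add_assoc] using h

lemma t11 : t (1:H) (1:H) = 1 := by
  rcases grouplike_cases hs _ (ch_one_one hs ht)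
      (by simpa using ht.counit_hom 1 1) with h | h
  · exact h
  · exfalso
    have hm := mulc_one hs ht 1 1
    rw [mul_one, h, hs.g_sq] at hm
    exact one_ne_g hs hm.symm

lemma tg1 : t g (1:H) = 1 := by
  rcases grouplike_cases hs _ (ch_g_one hs ht)
      (by simpa [hs.counit_g] using ht.counit_hom g 1) with h | h
  · exact h
  · exfalso
    have hm := mulc_g hs ht 1 1
    rw [mul_one, h, hs.g_sq] at hm
    exact one_ne_g hs hm.symm

lemma tν1 : t ν (1:H) = 0 := by
  have h := mulc_ν hs ht 1 1
  rw [mul_one, t11 hs ht, tg1 hs ht, one_mul, mul_one] at h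
  have h2 : t ν 1 + 0 = t ν 1 + t ν 1 := by rw [add_zero]; exact h
  exact (add_left_cancel h2).symm

lemma tgν1 : t (g*ν) (1:H) = 0 := by
  have h := mulc_gν hs ht 1 1
  rw [mul_one, t11 hs ht, tg1 hs ht, one_mul, mul_one] at h
  have h2 : t (g*ν) 1 + 0 = t (g*ν) 1 + t (g*ν) 1 := by rw [add_zero]; exact h
  exact (add_left_cancel h2).symm

lemma t1g_cases : t (1:H) g = 1 ∨ t (1:H) g = g :=
  grouplike_cases hs _ (ch_one_g hs ht)
    (by simpa [hs.counit_g] using ht.counit_hom 1 g)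

lemma tgg_cases : t g g = 1 ∨ t g g = g :=
  grouplike_cases hs _ (ch_g_g hs ht)
    (by simpa [hs.counit_g] using ht.counit_hom g g)

end Evals

/-- Structure (i) of the classification. -/
def SweedlerFormI (k : Type*) {H : Type*} [Field k] [Ring H] [HopfAlgebra k H]
    (g ν : H) (t : H →ₗ[k] H →ₗ[k] H) : Prop :=
  ∃ a : k,
    t (1 : H) (1 : H) = (1 : H) ∧
    t (1 : H) g = g ∧
    t (1 : H) ν = ν ∧
    t (1 : H) (g * ν) = (g * ν) ∧
    t g (1 : H) = (1 : H) ∧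
    t g g = g ∧
    t g ν = -ν ∧
    t g (g * ν) = -(g * ν) ∧
    t ν (1 : H) = 0 ∧
    t ν g = 0 ∧
    t ν ν = a • ν ∧
    t ν (g * ν) = a • (g * ν) ∧
    t (g * ν) (1 : H) = 0 ∧
    t (g * ν) g = 0 ∧
    t (g * ν) ν = a • ν ∧
    t (g * ν) (g * ν) = a • (g * ν)

/-- Structure (ii) of the classification. -/
def SweedlerFormII (k : Type*) {H : Type*} [Field k] [Ring H] [HopfAlgebra k H]
    (g ν : H) (t : H →ₗ[k] H →ₗ[k] H) : Prop :=
  ∃ a : k,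
    t (1 : H) (1 : H) = (1 : H) ∧
    t (1 : H) g = g ∧
    t (1 : H) ν = ν ∧
    t (1 : H) (g * ν) = (g * ν) ∧
    t g (1 : H) = (1 : H) ∧
    t g g = (1 : H) ∧
    t g ν = 0 ∧
    t g (g * ν) = 0 ∧
    t ν (1 : H) = 0 ∧
    t ν g = a • ((1 : H) - g) ∧
    t ν ν = -(a • ν) ∧
    t ν (g * ν) = -(a • (g * ν)) ∧
    t (g * ν) (1 : H) = 0 ∧
    t (g * ν) g = a • ((1 : H) - g) ∧
    t (g * ν) ν = -(a • ν) ∧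
    t (g * ν) (g * ν) = -(a • (g * ν))

/-- Structure (iii) of the classification. -/
def SweedlerFormIII (k : Type*) {H : Type*} [Field k] [Ring H] [HopfAlgebra k H]
    (g ν : H) (t : H →ₗ[k] H →ₗ[k] H) : Prop :=
  t (1 : H) (1 : H) = (1 : H) ∧
  t (1 : H) g = g ∧
  t (1 : H) ν = ν ∧
  t (1 : H) (g * ν) = (g * ν) ∧
  t g (1 : H) = (1 : H) ∧
  t g g = g ∧
  t g ν = ν ∧
  t g (g * ν) = (g * ν) ∧
  t ν (1 : H) = 0 ∧
  t ν g = 0 ∧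
  t ν ν = 0 ∧
  t ν (g * ν) = 0 ∧
  t (g * ν) (1 : H) = 0 ∧
  t (g * ν) g = 0 ∧
  t (g * ν) ν = 0 ∧
  t (g * ν) (g * ν) = 0

/-- Structure (iv) of the classification. -/
def SweedlerFormIV (k : Type*) {H : Type*} [Field k] [Ring H] [HopfAlgebra k H]
    (g ν : H) (t : H →ₗ[k] H →ₗ[k] H) : Prop :=
  t (1 : H) (1 : H) = (1 : H) ∧
  t (1 : H) g = g ∧
  t (1 : H) ν = 0 ∧
  t (1 : H) (g * ν) = 0 ∧
  t g (1 : H) = (1 : H) ∧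
  t g g = g ∧
  t g ν = 0 ∧
  t g (g * ν) = 0 ∧
  t ν (1 : H) = 0 ∧
  t ν g = 0 ∧
  t ν ν = 0 ∧
  t ν (g * ν) = 0 ∧
  t (g * ν) (1 : H) = 0 ∧
  t (g * ν) g = 0 ∧
  t (g * ν) ν = 0 ∧
  t (g * ν) (g * ν) = 0

/-- Structure (v) of the classification. -/
def SweedlerFormV (k : Type*) {H : Type*} [Field k] [Ring H] [HopfAlgebra k H]
    (g ν : H) (t : H →ₗ[k] H →ₗ[k] H) : Prop :=
  t (1 : H) (1 : H) = (1 : H) ∧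
  t (1 : H) g = g ∧
  t (1 : H) ν = 0 ∧
  t (1 : H) (g * ν) = 0 ∧
  t g (1 : H) = (1 : H) ∧
  t g g = (1 : H) ∧
  t g ν = 0 ∧
  t g (g * ν) = 0 ∧
  t ν (1 : H) = 0 ∧
  t ν g = 0 ∧
  t ν ν = 0 ∧
  t ν (g * ν) = 0 ∧
  t (g * ν) (1 : H) = 0 ∧
  t (g * ν) g = 0 ∧
  t (g * ν) ν = 0 ∧
  t (g * ν) (g * ν) = 0

/-- Structure (vi) of the classification. -/
def SweedlerFormVI (k : Type*) {H : Type*} [Field k] [Ring H] [HopfAlgebra k H]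
    (g ν : H) (t : H →ₗ[k] H →ₗ[k] H) : Prop :=
  t (1 : H) (1 : H) = (1 : H) ∧
  t (1 : H) g = (1 : H) ∧
  t (1 : H) ν = 0 ∧
  t (1 : H) (g * ν) = 0 ∧
  t g (1 : H) = (1 : H) ∧
  t g g = (1 : H) ∧
  t g ν = 0 ∧
  t g (g * ν) = 0 ∧
  t ν (1 : H) = 0 ∧
  t ν g = 0 ∧
  t ν ν = 0 ∧
  t ν (g * ν) = 0 ∧
  t (g * ν) (1 : H) = 0 ∧
  t (g * ν) g = 0 ∧
  t (g * ν) ν = 0 ∧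
  t (g * ν) (g * ν) = 0

section Cases
variable {k H : Type*} [Field k] [CharZero k] [Ring H] [HopfAlgebra k H]
  {g ν : H} (hs : IsSweedlerHopf k g ν)
  {t : H →ₗ[k] H →ₗ[k] H} (ht : IsRelaxedWeakPostHopf k t)
include hs ht

lemma case_p1 (hp : t (1:H) g = 1) : SweedlerFormVI k g ν t := by
  have hq : t g g = 1 := by
    have h := actc_g hs ht (1:H) g
    rw [hp, tg1 hs ht, mul_one] at h
    exact h.symm
  have h1ν : t (1:H) ν = 0 :=
    prim_11 hs _ (by rw [ch_one_ν hs ht, hp, t11 hs ht])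
  have h1gν : t (1:H) (g*ν) = 0 := by
    rw [mulc_one hs ht g ν, h1ν, mul_zero]
  have hgν' : t g ν = 0 :=
    prim_11 hs _ (by rw [ch_g_ν hs ht, hq, tg1 hs ht])
  have hggν : t g (g*ν) = 0 := by
    rw [mulc_g hs ht g ν, hgν', mul_zero]
  have hνg : t ν g = 0 :=
    prim_11 hs _ (by rw [ch_ν_g hs ht, hq, hp])
  have hνν : t ν ν = 0 :=
    prim_11 hs _ (by
      rw [ch_ν_ν hs ht, hq, hνg, tν1 hs ht, t11 hs ht, h1ν]; simp)
  have hνgν : t ν (g*ν) = 0 := by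
    rw [mulc_ν hs ht g ν, hνν, hνg, hq, one_mul, zero_mul, add_zero]
  have hgνg : t (g*ν) g = 0 :=
    prim_11 hs _ (by rw [ch_gν_g hs ht, hp, hq])
  have hgνν : t (g*ν) ν = 0 :=
    prim_11 hs _ (by
      rw [ch_gν_ν hs ht, hp, hgνg, h1ν, tg1 hs ht, hgν']; simp)
  have hgνgν : t (g*ν) (g*ν) = 0 := by
    rw [mulc_gν hs ht g ν, hgνν, hgνg, hp, one_mul, zero_mul, add_zero]
  exact ⟨t11 hs ht, hp, h1ν, h1gν, tg1 hs ht, hq, hgν', hggν, tν1 hs ht, hνg, hνν,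
    hνgν, tgν1 hs ht, hgνg, hgνν, hgνgν⟩

lemma t1ν_smul (hp : t (1:H) g = g) :
    ∃ α : k, t (1:H) ν = α•ν ∧ t (1:H) (g*ν) = α•(g*ν) ∧ α*α = α := by
  have hex := prim_g1 hs _ (by rw [ch_one_ν hs ht, hp, t11 hs ht])
  have hcomm : g * t (1:H) ν = -(t (1:H) ν * g) := by
    have h1 : t (1:H) (g*ν) = g * t 1 ν := by rw [mulc_one hs ht g ν, hp]
    have h2 : t (1:H) (ν*g) = t 1 ν * g := by rw [mulc_one hs ht ν g, hp]
    rw [sw_νg hs, map_neg, h1] at h2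
    exact neg_eq_iff_eq_neg.mp h2
  obtain ⟨α, hα⟩ := skew_force hs hcomm hex
  refine ⟨α, hα, ?_, ?_⟩
  · rw [mulc_one hs ht g ν, hp, hα, mul_smul_comm]
  · have h := actc_one hs ht (1:H) ν
    rw [t11 hs ht, hα, map_smul, hα, smul_smul] at h
    exact smul_ν_inj hs h

lemma case_pg_qg (hp : t (1:H) g = g) (hq : t g g = g) :
    SweedlerFormI k g ν t ∨ SweedlerFormIII k g ν t ∨ SweedlerFormIV k g ν t := by
  obtain ⟨α, hα, hαgν, hαα⟩ := t1ν_smul hs ht hp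
  have hexβ := prim_g1 hs _ (by rw [ch_g_ν hs ht, hq, tg1 hs ht])
  have hcommβ : g * t g ν = -(t g ν * g) := by
    have h1 : t g (g*ν) = g * t g ν := by rw [mulc_g hs ht g ν, hq]
    have h2 : t g (ν*g) = t g ν * g := by rw [mulc_g hs ht ν g, hq]
    rw [sw_νg hs, map_neg, h1] at h2
    exact neg_eq_iff_eq_neg.mp h2
  obtain ⟨β, hβ⟩ := skew_force hs hcommβ hexβ
  have hβgν : t g (g*ν) = β•(g*ν) := by
    rw [mulc_g hs ht g ν, hq, hβ, mul_smul_comm]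
  have hββ : β*β = α := by
    have h := actc_g hs ht g ν
    rw [hq, hs.g_sq, hβ, map_smul, hβ, smul_smul, hα] at h
    exact smul_ν_inj hs h
  have hαβ : α*β = β := by
    have h := actc_one hs ht g ν
    rw [hp, hβ, map_smul, hα, smul_smul] at h
    have h2 := smul_ν_inj hs h
    linear_combination h2
  have hνg : t ν g = 0 := prim_gg hs _ (by rw [ch_ν_g hs ht, hq, hp])
  have hexa := prim_g1 hs _ (by
    rw [ch_ν_ν hs ht, hq, hνg, tν1 hs ht, t11 hs ht]; simp)
  have hgtνν : t ν (g*ν) = g * t ν ν := by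
    rw [mulc_ν hs ht g ν, hq, hνg, zero_mul, add_zero]
  have hcomma : g * t ν ν = -(t ν ν * g) := by
    have h2 : t ν (ν*g) = t ν ν * g := by
      rw [mulc_ν hs ht ν g, hνg, mul_zero, zero_add, hp]
    rw [sw_νg hs, map_neg, hgtνν] at h2
    exact neg_eq_iff_eq_neg.mp h2
  obtain ⟨a, ha⟩ := skew_force hs hcomma hexa
  have hagν : t ν (g*ν) = a•(g*ν) := by rw [hgtνν, ha, mul_smul_comm]
  have hact : ∀ z : H, t ν (t g z) = -(t (g*ν) z) := by
    intro z
    have h := actc_ν hs ht g z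
    rw [hνg, mul_zero, map_zero, LinearMap.zero_apply, zero_add, hp, sw_νg hs,
      map_neg, LinearMap.neg_apply] at h
    exact h
  have hMg : t (g*ν) g = 0 := by
    have h := hact g
    rw [hq, hνg] at h
    exact (neg_eq_zero.mp h.symm)
  have hMν : t (g*ν) ν = (-(β*a))•ν := by
    have h := hact ν
    rw [hβ, map_smul, ha, smul_smul] at h
    rw [neg_smul]
    exact neg_eq_iff_eq_neg.mp h.symm
  have hMgν : t (g*ν) (g*ν) = (-(β*a))•(g*ν) := by
    have h := hact (g*ν)
    rw [hβgν, map_smul, hagν, smul_smul] at h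
    rw [neg_smul]
    exact neg_eq_iff_eq_neg.mp h.symm
  have haa : a*a*(1+β) = 0 := by
    have h := actc_ν hs ht ν ν
    rw [ha, map_smul, ha, smul_smul, hα] at h
    rw [show g * (a•ν) = a • (g*ν) from mul_smul_comm a g ν,
      show ν * (α•ν) = (0:H) by rw [mul_smul_comm, hs.ν_sq, smul_zero],
      map_zero, LinearMap.zero_apply, add_zero, map_smul, LinearMap.smul_apply,
      hMν, smul_smul] at h
    have := smul_ν_inj hs h
    linear_combination this
  have hα01 : α = 0 ∨ α = 1 := by
    have h' : α*(α-1) = 0 := by linear_combination hαα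
    rcases mul_eq_zero.mp h' with h | h
    · exact Or.inl h
    · exact Or.inr (by linear_combination h)
  rcases hα01 with hα0 | hα1
  · have hβ0 : β = 0 := by rw [hα0] at hαβ; linear_combination -hαβ
    have ha0 : a = 0 := by
      rw [hβ0] at haa
      have : a * a = 0 := by linear_combination haa
      exact mul_self_eq_zero.mp this
    refine Or.inr (Or.inr ⟨t11 hs ht, hp, ?_, ?_, tg1 hs ht, hq, ?_, ?_, tν1 hs ht,
      hνg, ?_, ?_, tgν1 hs ht, hMg, ?_, ?_⟩) <;>
      simp [hα, hβ, ha, hαgν, hβgν, hagν, hMν, hMgν, hα0, hβ0, ha0]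
  · have hββ1 : (β-1)*(β+1) = 0 := by rw [hα1] at hββ; linear_combination hββ
    rcases mul_eq_zero.mp hββ1 with hβ1 | hβm1
    · have hβv : β = 1 := by linear_combination hβ1
      have ha0 : a = 0 := by
        rw [hβv] at haa
        have h2 : a * a = 0 := by
          have hne : (2:k) ≠ 0 := two_ne_zero
          have : (a*a) * 2 = 0 := by linear_combination haa
          rcases mul_eq_zero.mp this with h | h
          · exact h
          · exact absurd h hne
        exact mul_self_eq_zero.mp h2
      refine Or.inr (Or.inl ⟨t11 hs ht, hp, ?_, ?_, tg1 hs ht, hq, ?_, ?_, tν1 hs ht,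
        hνg, ?_, ?_, tgν1 hs ht, hMg, ?_, ?_⟩) <;>
        simp [hα, hβ, ha, hαgν, hβgν, hagν, hMν, hMgν, hα1, hβv, ha0]
    · have hβv : β = -1 := by linear_combination hβm1
      refine Or.inl ⟨a, t11 hs ht, hp, ?_, ?_, tg1 hs ht, hq, ?_, ?_, tν1 hs ht,
        hνg, ?_, ?_, tgν1 hs ht, hMg, ?_, ?_⟩ <;>
        simp [hα, hβ, ha, hαgν, hβgν, hagν, hMν, hMgν, hα1, hβv]


lemma case_pg_q1 (hp : t (1:H) g = g) (hq : t g g = 1) :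
    SweedlerFormII k g ν t ∨ SweedlerFormV k g ν t := by
  obtain ⟨α, hα, hαgν, hαα⟩ := t1ν_smul hs ht hp
  have hgν0 : t g ν = 0 := prim_11 hs _ (by rw [ch_g_ν hs ht, hq, tg1 hs ht])
  have hggν : t g (g*ν) = 0 := by rw [mulc_g hs ht g ν, hgν0, mul_zero]
  have hex := prim_1g hs _ (by rw [ch_ν_g hs ht, hq, hp])
  have hsum : t ν g + t ν g * g = 0 := by
    have h := mulc_ν hs ht g g
    rw [hs.g_sq, tν1 hs ht, hq, one_mul, hp] at h
    exact h.symm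
  obtain ⟨c, hνg⟩ := skew_force2 hs hsum hex
  have hνν : t ν ν = (-(c*α))•ν := by
    apply prim_sp hs _ (c*α)
    rw [ch_ν_ν hs ht, hq, hνg, hα, tν1 hs ht, t11 hs ht, hgν0]
    simp only [add_tmul, neg_tmul, tmul_smul, ← smul_tmul', smul_smul, neg_smul,
      tmul_zero, zero_tmul, add_zero, zero_add]
    module
  have hνgν : t ν (g*ν) = (-(c*α))•(g*ν) := by
    rw [mulc_ν hs ht g ν, hq, one_mul, hνν, hνg, hα]
    simp only [add_mul, smul_mul_assoc, mul_smul_comm, one_mul, smul_smul]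
    module
  have hact : ∀ z : H, t ν (t g z) =
      c•(t g z) + (-c)•(t (1:H) z) + -(t (g*ν) z) := by
    intro z
    have h := actc_ν hs ht g z
    rw [hνg, hp, sw_νg hs, mul_add, mul_smul_comm, mul_smul_comm, mul_one,
      hs.g_sq] at h
    rw [map_add, map_smul, map_smul, map_neg] at h
    simpa only [LinearMap.add_apply, LinearMap.smul_apply, LinearMap.neg_apply] using h
  have hMg : t (g*ν) g = c•(1:H) + (-c)•g := by
    have h := hact g
    rw [hq, tν1 hs ht, hp] at h
    exact (add_neg_eq_zero.mp h.symm).symm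
  have hMν : t (g*ν) ν = (-(c*α))•ν := by
    have h := hact ν
    rw [hgν0, map_zero, hα, smul_smul, smul_zero, zero_add] at h
    have h2 := (add_neg_eq_zero.mp h.symm).symm
    rw [h2]
    module
  have hMgν : t (g*ν) (g*ν) = (-(c*α))•(g*ν) := by
    have h := hact (g*ν)
    rw [hggν, map_zero, hαgν, smul_smul, smul_zero, zero_add] at h
    have h2 := (add_neg_eq_zero.mp h.symm).symm
    rw [h2]
    module
  have hcc : c*c*(1-α) = 0 := by
    have h := actc_ν hs ht ν g
    rw [hνg, hνν, hα] at h
    rw [show g * ((-(c*α))•ν) = (-(c*α))•(g*ν) from mul_smul_comm _ g ν,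
      show ν * (α•ν) = (0:H) by rw [mul_smul_comm, hs.ν_sq, smul_zero],
      map_zero, LinearMap.zero_apply, add_zero, map_smul, LinearMap.smul_apply,
      hMg] at h
    rw [map_add, map_smul, map_smul, tν1 hs ht, hνg] at h
    have h2 := congrArg ((swB hs).coord 0) h
    simp [LinearMap.add_apply, LinearMap.smul_apply, map_add, map_smul,
      map_neg, smul_eq_mul, smul_zero, coord_one hs, coord_g hs, coord_ν hs,
      coord_gν hs] at h2
    rcases h2 with h2 | h2
    · linear_combination c*h2
    · rw [h2]; ring
  have hα01 : α = 0 ∨ α = 1 := by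
    have h' : α*(α-1) = 0 := by linear_combination hαα
    rcases mul_eq_zero.mp h' with h | h
    · exact Or.inl h
    · exact Or.inr (by linear_combination h)
  rcases hα01 with hα0 | hα1
  · have hc0 : c = 0 := by
      rw [hα0] at hcc
      have : c * c = 0 := by linear_combination hcc
      exact mul_self_eq_zero.mp this
    refine Or.inr ⟨t11 hs ht, hp, ?_, ?_, tg1 hs ht, hq, hgν0, hggν, tν1 hs ht,
      ?_, ?_, ?_, tgν1 hs ht, ?_, ?_, ?_⟩ <;>
      simp [hα, hαgν, hνg, hνν, hνgν, hMg, hMν, hMgν, hα0, hc0]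
  · refine Or.inl ⟨c, t11 hs ht, hp, ?_, ?_, tg1 hs ht, hq, hgν0, hggν, tν1 hs ht,
      ?_, ?_, ?_, tgν1 hs ht, ?_, ?_, ?_⟩ <;>
      simp [hα, hαgν, hνg, hνν, hνgν, hMg, hMν, hMgν, hα1, smul_sub, sub_eq_add_neg]


lemma ne_I_II : SweedlerFormI k g ν t → SweedlerFormII k g ν t → False := by
  rintro ⟨a,_,_,_,_,_,h,_⟩ ⟨b,_,_,_,_,_,h',_⟩
  exact one_ne_g hs (h'.symm.trans h)

lemma ne_I_III : SweedlerFormI k g ν t → SweedlerFormIII k g ν t → False := by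
  rintro ⟨a,_,_,_,_,_,_,h,_⟩ ⟨_,_,_,_,_,_,h',_⟩
  exact neg_ν_ne hs (h.symm.trans h')

lemma ne_I_IV : SweedlerFormI k g ν t → SweedlerFormIV k g ν t → False := by
  rintro ⟨a,_,_,h,_⟩ ⟨_,_,h',_⟩
  exact ν_ne_zero hs (h.symm.trans h')

lemma ne_I_V : SweedlerFormI k g ν t → SweedlerFormV k g ν t → False := by
  rintro ⟨a,_,_,_,_,_,h,_⟩ ⟨_,_,_,_,_,h',_⟩
  exact one_ne_g hs (h'.symm.trans h)

lemma ne_I_VI : SweedlerFormI k g ν t → SweedlerFormVI k g ν t → False := by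
  rintro ⟨a,_,h,_⟩ ⟨_,h',_⟩
  exact one_ne_g hs (h'.symm.trans h)

lemma ne_II_III : SweedlerFormII k g ν t → SweedlerFormIII k g ν t → False := by
  rintro ⟨a,_,_,_,_,_,h,_⟩ ⟨_,_,_,_,_,h',_⟩
  exact one_ne_g hs (h.symm.trans h')

lemma ne_II_IV : SweedlerFormII k g ν t → SweedlerFormIV k g ν t → False := by
  rintro ⟨a,_,_,_,_,_,h,_⟩ ⟨_,_,_,_,_,h',_⟩
  exact one_ne_g hs (h.symm.trans h')

lemma ne_II_V : SweedlerFormII k g ν t → SweedlerFormV k g ν t → False := by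
  rintro ⟨a,_,_,h,_⟩ ⟨_,_,h',_⟩
  exact ν_ne_zero hs (h.symm.trans h')

lemma ne_II_VI : SweedlerFormII k g ν t → SweedlerFormVI k g ν t → False := by
  rintro ⟨a,_,h,_⟩ ⟨_,h',_⟩
  exact one_ne_g hs (h'.symm.trans h)

lemma ne_III_IV : SweedlerFormIII k g ν t → SweedlerFormIV k g ν t → False := by
  rintro ⟨_,_,h,_⟩ ⟨_,_,h',_⟩
  exact ν_ne_zero hs (h.symm.trans h')

lemma ne_III_V : SweedlerFormIII k g ν t → SweedlerFormV k g ν t → False := by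
  rintro ⟨_,_,_,_,_,h,_⟩ ⟨_,_,_,_,_,h',_⟩
  exact one_ne_g hs (h'.symm.trans h)

lemma ne_III_VI : SweedlerFormIII k g ν t → SweedlerFormVI k g ν t → False := by
  rintro ⟨_,h,_⟩ ⟨_,h',_⟩
  exact one_ne_g hs (h'.symm.trans h)

lemma ne_IV_V : SweedlerFormIV k g ν t → SweedlerFormV k g ν t → False := by
  rintro ⟨_,_,_,_,_,h,_⟩ ⟨_,_,_,_,_,h',_⟩
  exact one_ne_g hs (h'.symm.trans h)

lemma ne_IV_VI : SweedlerFormIV k g ν t → SweedlerFormVI k g ν t → False := by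
  rintro ⟨_,h,_⟩ ⟨_,h',_⟩
  exact one_ne_g hs (h'.symm.trans h)

lemma ne_V_VI : SweedlerFormV k g ν t → SweedlerFormVI k g ν t → False := by
  rintro ⟨_,h,_⟩ ⟨_,h',_⟩
  exact one_ne_g hs (h'.symm.trans h)

end Cases

/-- Main theorem: every relaxed weak post-Hopf structure on Sweedler's 4-dimensional Hopf
algebra is of exactly one of the six forms (i)–(vi). -/
theorem sweedler_relaxed_weak_postHopf_classification {k H : Type*} [Field k] [CharZero k] [Ring H] [HopfAlgebra k H]
    (g ν : H) (hs : IsSweedlerHopf k g ν)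
    (t : H →ₗ[k] H →ₗ[k] H) (ht : IsRelaxedWeakPostHopf k t) :
    ∃! i : Fin 6,
      (i = 0 ∧ SweedlerFormI k g ν t) ∨
      (i = 1 ∧ SweedlerFormII k g ν t) ∨
      (i = 2 ∧ SweedlerFormIII k g ν t) ∨
      (i = 3 ∧ SweedlerFormIV k g ν t) ∨
      (i = 4 ∧ SweedlerFormV k g ν t) ∨
      (i = 5 ∧ SweedlerFormVI k g ν t) := by
  rcases t1g_cases hs ht with hp | hp
  · have hF := case_p1 hs ht hp
    refine ⟨5, Or.inr (Or.inr (Or.inr (Or.inr (Or.inr ⟨rfl, hF⟩)))), ?_⟩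
    rintro y (⟨rfl, h⟩ | ⟨rfl, h⟩ | ⟨rfl, h⟩ | ⟨rfl, h⟩ | ⟨rfl, h⟩ | ⟨rfl, h⟩)
    · exact (ne_I_VI hs ht h hF).elim
    · exact (ne_II_VI hs ht h hF).elim
    · exact (ne_III_VI hs ht h hF).elim
    · exact (ne_IV_VI hs ht h hF).elim
    · exact (ne_V_VI hs ht h hF).elim
    · rfl
  · rcases tgg_cases hs ht with hq | hq
    · rcases case_pg_q1 hs ht hp hq with hF | hF
      · refine ⟨1, Or.inr (Or.inl ⟨rfl, hF⟩), ?_⟩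
        rintro y (⟨rfl, h⟩ | ⟨rfl, h⟩ | ⟨rfl, h⟩ | ⟨rfl, h⟩ | ⟨rfl, h⟩ | ⟨rfl, h⟩)
        · exact (ne_I_II hs ht h hF).elim
        · rfl
        · exact (ne_II_III hs ht hF h).elim
        · exact (ne_II_IV hs ht hF h).elim
        · exact (ne_II_V hs ht hF h).elim
        · exact (ne_II_VI hs ht hF h).elim
      · refine ⟨4, Or.inr (Or.inr (Or.inr (Or.inr (Or.inl ⟨rfl, hF⟩)))), ?_⟩
        rintro y (⟨rfl, h⟩ | ⟨rfl, h⟩ | ⟨rfl, h⟩ | ⟨rfl, h⟩ | ⟨rfl, h⟩ | ⟨rfl, h⟩)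
        · exact (ne_I_V hs ht h hF).elim
        · exact (ne_II_V hs ht h hF).elim
        · exact (ne_III_V hs ht h hF).elim
        · exact (ne_IV_V hs ht h hF).elim
        · rfl
        · exact (ne_V_VI hs ht hF h).elim
    · rcases case_pg_qg hs ht hp hq with hF | hF | hF
      · refine ⟨0, Or.inl ⟨rfl, hF⟩, ?_⟩
        rintro y (⟨rfl, h⟩ | ⟨rfl, h⟩ | ⟨rfl, h⟩ | ⟨rfl, h⟩ | ⟨rfl, h⟩ | ⟨rfl, h⟩)
        · rfl
        · exact (ne_I_II hs ht hF h).elim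
        · exact (ne_I_III hs ht hF h).elim
        · exact (ne_I_IV hs ht hF h).elim
        · exact (ne_I_V hs ht hF h).elim
        · exact (ne_I_VI hs ht hF h).elim
      · refine ⟨2, Or.inr (Or.inr (Or.inl ⟨rfl, hF⟩)), ?_⟩
        rintro y (⟨rfl, h⟩ | ⟨rfl, h⟩ | ⟨rfl, h⟩ | ⟨rfl, h⟩ | ⟨rfl, h⟩ | ⟨rfl, h⟩)
        · exact (ne_I_III hs ht h hF).elim
        · exact (ne_II_III hs ht h hF).elim
        · rfl
        · exact (ne_III_IV hs ht hF h).elim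
        · exact (ne_III_V hs ht hF h).elim
        · exact (ne_III_VI hs ht hF h).elim
      · refine ⟨3, Or.inr (Or.inr (Or.inr (Or.inl ⟨rfl, hF⟩))), ?_⟩
        rintro y (⟨rfl, h⟩ | ⟨rfl, h⟩ | ⟨rfl, h⟩ | ⟨rfl, h⟩ | ⟨rfl, h⟩ | ⟨rfl, h⟩)
        · exact (ne_I_IV hs ht h hF).elim
        · exact (ne_II_IV hs ht h hF).elim
        · exact (ne_III_IV hs ht h hF).elim
        · rfl
        · exact (ne_IV_V hs ht hF h).elim
        · exact (ne_IV_VI hs ht hF h).elim
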